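/- For any point M inside triangle ABC, R_A + R_B + R_C ≥ (c/b + b/c)·r_a + (c/a + a/c)·r_b + (a/b + b/a)·r_c, where R_A, R_B, R_C are distances from M to the vertices and r_a, r_b, r_c are distances from M to the opposite sides. -/

import Mathlib

/-! For `M` in the angle at `A`, write `M - A = β • (B - A) + γ • (C - A)` with `β, γ ≥ 0`.
Measuring distances to the sides by Gram determinants gives `c · r_c ≤ γ · G` and
`b · r_b ≤ β · G`, where `G²` is the Gram determinant of `B - A, C - A` (so `G` is twice the area
of the triangle). A Lagrange-type identity then shows `G (β c² + γ b²) ≤ a b c · R_A`, i.e. the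
weighted vertex bound `c r_b + b r_c ≤ a R_A`. Dividing the three vertex bounds by `a`, `b`, `c`
and summing gives the inequality. -/

open Metric
open scoped RealInnerProductSpace

section InnerProductSpace

variable {V : Type*} [NormedAddCommGroup V] [InnerProductSpace ℝ V]

theorem infDist_affineSpan_pair_mul_dist_le {A B : V} (hAB : A ≠ B) (M : V) :
    infDist M (affineSpan ℝ {A, B} : Set V) * dist A B ≤
      √(‖B - A‖ ^ 2 * ‖M - A‖ ^ 2 - ⟪B - A, M - A⟫ ^ 2) := by
  set u := B - A
  set w := M - A
  have hu : ‖u‖ ≠ 0 := norm_ne_zero_iff.mpr (sub_ne_zero.mpr hAB.symm)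
  set t := ⟪u, w⟫ / ‖u‖ ^ 2
  have hfoot : M - AffineMap.lineMap A B t = w - t • u := by
    rw [AffineMap.lineMap_apply_module]; module
  have hgram : (‖w - t • u‖ * ‖u‖) ^ 2 = ‖u‖ ^ 2 * ‖w‖ ^ 2 - ⟪u, w⟫ ^ 2 := by
    rw [mul_pow, norm_sub_sq_real, norm_smul, inner_smul_right, real_inner_comm,
      Real.norm_eq_abs, mul_pow, sq_abs]
    simp only [t]
    field_simp
    ring
  calc infDist M (affineSpan ℝ {A, B} : Set V) * dist A B
      ≤ dist M (AffineMap.lineMap A B t) * ‖u‖ := by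
        rw [dist_eq_norm' A B]
        gcongr
        exact infDist_le_dist_of_mem (AffineMap.lineMap_mem_affineSpan_pair t A B)
    _ = √(‖u‖ ^ 2 * ‖w‖ ^ 2 - ⟪u, w⟫ ^ 2) := by
        rw [dist_eq_norm, hfoot, ← hgram, Real.sqrt_sq (by positivity)]

theorem gram_smul_add_smul_right (u v : V) (β γ : ℝ) :
    ‖u‖ ^ 2 * ‖β • u + γ • v‖ ^ 2 - ⟪u, β • u + γ • v⟫ ^ 2 =
      γ ^ 2 * (‖u‖ ^ 2 * ‖v‖ ^ 2 - ⟪u, v⟫ ^ 2) := by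
  rw [norm_add_sq_real, norm_smul, norm_smul, inner_add_right, inner_smul_left, inner_smul_right,
    inner_smul_right, real_inner_self_eq_norm_sq, Real.norm_eq_abs, Real.norm_eq_abs, mul_pow,
    mul_pow, sq_abs, sq_abs]
  simp only [conj_trivial]
  ring

theorem gram_nonneg (u v : V) : 0 ≤ ‖u‖ ^ 2 * ‖v‖ ^ 2 - ⟪u, v⟫ ^ 2 := by
  rw [sub_nonneg, ← mul_pow, ← sq_abs]
  gcongr
  exact abs_real_inner_le_norm u v

/-- In the plane this is Lagrange's identity `‖w‖²‖z‖² = ⟪w, z⟫² + (w × z)²` for `w = β • u + γ • v`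
and `z = ‖u‖² v⊥ - ‖v‖² u⊥`. -/
theorem norm_sq_mul_norm_sq_mul_norm_sub_sq_mul_norm_add_sq (u v : V) (β γ : ℝ) :
    ‖u‖ ^ 2 * ‖v‖ ^ 2 * ‖u - v‖ ^ 2 * ‖β • u + γ • v‖ ^ 2 =
      (‖u‖ ^ 2 * ‖v‖ ^ 2 - ⟪u, v⟫ ^ 2) * (β * ‖u‖ ^ 2 + γ * ‖v‖ ^ 2) ^ 2 +
        (β * ‖u‖ ^ 2 * (⟪u, v⟫ - ‖v‖ ^ 2) + γ * ‖v‖ ^ 2 * (‖u‖ ^ 2 - ⟪u, v⟫)) ^ 2 := by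
  rw [norm_sub_sq_real, norm_add_sq_real, norm_smul, norm_smul, inner_smul_left, inner_smul_right,
    Real.norm_eq_abs, Real.norm_eq_abs, mul_pow, mul_pow, sq_abs, sq_abs]
  simp only [conj_trivial]
  ring

theorem sqrt_gram_mul_le (u v : V) (β γ : ℝ) :
    √(‖u‖ ^ 2 * ‖v‖ ^ 2 - ⟪u, v⟫ ^ 2) * (β * ‖u‖ ^ 2 + γ * ‖v‖ ^ 2) ≤
      ‖u‖ * ‖v‖ * ‖u - v‖ * ‖β • u + γ • v‖ := by
  refine le_of_sq_le_sq ?_ (by positivity)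
  rw [mul_pow, Real.sq_sqrt (gram_nonneg u v), mul_pow, mul_pow, mul_pow,
    norm_sq_mul_norm_sq_mul_norm_sub_sq_mul_norm_add_sq]
  exact le_add_of_nonneg_right (sq_nonneg _)

theorem exists_nonneg_smul_add_smul_of_mem_convexHull {A B C M : V}
    (hM : M ∈ convexHull ℝ {A, B, C}) :
    ∃ β γ : ℝ, 0 ≤ β ∧ 0 ≤ γ ∧ M - A = β • (B - A) + γ • (C - A) := by
  set cone := {M : V | ∃ β γ : ℝ, 0 ≤ β ∧ 0 ≤ γ ∧ M - A = β • (B - A) + γ • (C - A)}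
  have hcone : Convex ℝ cone := by
    rintro x ⟨β₁, γ₁, hβ₁, hγ₁, hx⟩ y ⟨β₂, γ₂, hβ₂, hγ₂, hy⟩ a b ha hb hab
    refine ⟨a * β₁ + b * β₂, a * γ₁ + b * γ₂, by positivity, by positivity, ?_⟩
    linear_combination (norm := module) a • hx + b • hy + hab • A
  refine convexHull_min ?_ hcone hM
  simp only [Set.insert_subset_iff, Set.singleton_subset_iff]
  exact ⟨⟨0, 0, le_rfl, le_rfl, by simp⟩, ⟨1, 0, zero_le_one, le_rfl, by simp⟩,
    ⟨0, 1, le_rfl, zero_le_one, by simp⟩⟩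

theorem dist_mul_infDist_add_dist_mul_infDist_le {A B C M : V} (hAB : A ≠ B) (hAC : A ≠ C)
    {β γ : ℝ} (hβ : 0 ≤ β) (hγ : 0 ≤ γ) (hM : M - A = β • (B - A) + γ • (C - A)) :
    dist A B * infDist M (affineSpan ℝ {C, A} : Set V) +
      dist C A * infDist M (affineSpan ℝ {A, B} : Set V) ≤ dist B C * dist M A := by
  rw [dist_eq_norm' A B, dist_eq_norm C A, dist_eq_norm B C, dist_eq_norm M A,
    ← sub_sub_sub_cancel_right B C A]
  set u := B - A
  set v := C - A
  set G := √(‖u‖ ^ 2 * ‖v‖ ^ 2 - ⟪u, v⟫ ^ 2)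
  have hu : 0 < ‖u‖ := norm_pos_iff.mpr (sub_ne_zero.mpr hAB.symm)
  have hv : 0 < ‖v‖ := norm_pos_iff.mpr (sub_ne_zero.mpr hAC.symm)
  have hc : infDist M (affineSpan ℝ {A, B} : Set V) * ‖u‖ ≤ γ * G := by
    have := infDist_affineSpan_pair_mul_dist_le hAB M
    rwa [dist_eq_norm', hM, gram_smul_add_smul_right, Real.sqrt_mul (sq_nonneg γ),
      Real.sqrt_sq hγ] at this
  have hb : infDist M (affineSpan ℝ {C, A} : Set V) * ‖v‖ ≤ β * G := by
    have := infDist_affineSpan_pair_mul_dist_le hAC M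
    rwa [Set.pair_comm, dist_eq_norm', hM, add_comm, gram_smul_add_smul_right,
      Real.sqrt_mul (sq_nonneg β), Real.sqrt_sq hβ, mul_comm (‖v‖ ^ 2), real_inner_comm] at this
  rw [hM]
  refine le_of_mul_le_mul_left ?_ (mul_pos hu hv)
  calc ‖u‖ * ‖v‖ * (‖u‖ * infDist M (affineSpan ℝ {C, A} : Set V) +
        ‖v‖ * infDist M (affineSpan ℝ {A, B} : Set V))
      = ‖u‖ ^ 2 * (infDist M (affineSpan ℝ {C, A} : Set V) * ‖v‖) +
          ‖v‖ ^ 2 * (infDist M (affineSpan ℝ {A, B} : Set V) * ‖u‖) := by ring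
    _ ≤ ‖u‖ ^ 2 * (β * G) + ‖v‖ ^ 2 * (γ * G) := by gcongr
    _ = G * (β * ‖u‖ ^ 2 + γ * ‖v‖ ^ 2) := by ring
    _ ≤ ‖u‖ * ‖v‖ * (‖u - v‖ * ‖β • u + γ • v‖) := by
        rw [← mul_assoc]; exact sqrt_gram_mul_le u v β γ

end InnerProductSpace

theorem stmt_1 (A B C M : EuclideanSpace ℝ (Fin 2))
    (hABC : AffineIndependent ℝ ![A, B, C])
    (hM : M ∈ interior (convexHull ℝ {A, B, C})) :
    dist M A + dist M B + dist M C ≥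
      (dist A B / dist C A + dist C A / dist A B) *
        infDist M (affineSpan ℝ {B, C} : Set (EuclideanSpace ℝ (Fin 2))) +
      (dist A B / dist B C + dist B C / dist A B) *
        infDist M (affineSpan ℝ {C, A} : Set (EuclideanSpace ℝ (Fin 2))) +
      (dist B C / dist C A + dist C A / dist B C) *
        infDist M (affineSpan ℝ {A, B} : Set (EuclideanSpace ℝ (Fin 2))) := by
  have hAB : A ≠ B := by simpa using hABC.injective.ne (by decide : (0 : Fin 3) ≠ 1)
  have hBC : B ≠ C := by simpa using hABC.injective.ne (by decide : (1 : Fin 3) ≠ 2)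
  have hCA : C ≠ A := by simpa using hABC.injective.ne (by decide : (2 : Fin 3) ≠ 0)
  have hA := interior_subset hM
  have hB : M ∈ convexHull ℝ {B, C, A} := by rwa [Set.insert_comm A B, Set.pair_comm A C] at hA
  have hC : M ∈ convexHull ℝ {C, A, B} := by rwa [Set.pair_comm B C, Set.insert_comm A C] at hA
  obtain ⟨β₁, γ₁, hβ₁, hγ₁, h₁⟩ := exists_nonneg_smul_add_smul_of_mem_convexHull hA
  obtain ⟨β₂, γ₂, hβ₂, hγ₂, h₂⟩ := exists_nonneg_smul_add_smul_of_mem_convexHull hB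
  obtain ⟨β₃, γ₃, hβ₃, hγ₃, h₃⟩ := exists_nonneg_smul_add_smul_of_mem_convexHull hC
  have kA := dist_mul_infDist_add_dist_mul_infDist_le hAB hCA.symm hβ₁ hγ₁ h₁
  have kB := dist_mul_infDist_add_dist_mul_infDist_le hBC hAB.symm hβ₂ hγ₂ h₂
  have kC := dist_mul_infDist_add_dist_mul_infDist_le hCA hBC.symm hβ₃ hγ₃ h₃
  set ra := infDist M (affineSpan ℝ {B, C} : Set (EuclideanSpace ℝ (Fin 2)))
  set rb := infDist M (affineSpan ℝ {C, A} : Set (EuclideanSpace ℝ (Fin 2)))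
  set rc := infDist M (affineSpan ℝ {A, B} : Set (EuclideanSpace ℝ (Fin 2)))
  have ha := dist_pos.mpr hBC
  have hb := dist_pos.mpr hCA
  have hc := dist_pos.mpr hAB
  calc (dist A B / dist C A + dist C A / dist A B) * ra +
        (dist A B / dist B C + dist B C / dist A B) * rb +
        (dist B C / dist C A + dist C A / dist B C) * rc
      = (dist A B * rb + dist C A * rc) / dist B C + (dist B C * rc + dist A B * ra) / dist C A +
          (dist C A * ra + dist B C * rb) / dist A B := by
        field_simp
        ring
    _ ≤ dist M A + dist M B + dist M C := by
        gcongr ?_ + ?_ + ?_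
        · exact (div_le_iff₀ ha).mpr (by linarith)
        · exact (div_le_iff₀ hb).mpr (by linarith)
        · exact (div_le_iff₀ hc).mpr (by linarith)
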